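/- arXiv:2409.20088 — 4 statements merged into one kernel-verified Lean document; each statement's English description precedes it below -/
import Mathlib

section
/- Suppose char K = 2 and φ ∈ O(V,Q) is cyclic with minimal polynomial (X − 1)^{2m}, where m ≥ 1. Then im((φ − 1)^{m+1}) = ker((φ − 1)^{m−1}) and this subspace is totally isotropic, while im((φ − 1)^m) = ker((φ − 1)^m) and this subspace is not totally isotropic. -/
open Polynomial Module

variable {K V : Type*}

section Defs

variable [Field K] [AddCommGroup V] [Module K V]

/-- The polar form `f_Q(u,w) = Q(u+w) - Q u - Q w` of a quadratic form. -/
def polarF (Q : QuadraticForm K V) (u w : V) : K := Q (u + w) - Q u - Q w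

/-- `Q` is nondefective: its polar form is nondegenerate. -/
def Nondefective (Q : QuadraticForm K V) : Prop :=
  ∀ u : V, (∀ w : V, polarF Q u w = 0) → u = 0

/-- Membership in the orthogonal group `O(V,Q)`. -/
def InO (Q : QuadraticForm K V) (φ : V ≃ₗ[K] V) : Prop := ∀ v : V, Q (φ v) = Q v

/-- Membership in the special orthogonal group `SO(V,Q)`:
orthogonal and `dim im(φ - 1)` is even. -/
def InSO (Q : QuadraticForm K V) (φ : V ≃ₗ[K] V) : Prop :=
  InO Q φ ∧ Even (Module.finrank K (LinearMap.range (φ.toLinearMap - LinearMap.id)))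

/-- `φ` is a product of two involutions of `SO(V,Q)`. -/
def BireflSO (Q : QuadraticForm K V) (φ : V ≃ₗ[K] V) : Prop :=
  ∃ σ τ : V ≃ₗ[K] V, InSO Q σ ∧ InSO Q τ ∧ σ * σ = 1 ∧ τ * τ = 1 ∧ φ = σ * τ

/-- A subspace is totally isotropic if `Q` vanishes on it. -/
def TotIsotropic (Q : QuadraticForm K V) (U : Submodule K V) : Prop := ∀ u ∈ U, Q u = 0

/-- A subspace invariant under a linear map. -/
def Invariant (f : V →ₗ[K] V) (U : Submodule K V) : Prop := ∀ u ∈ U, f u ∈ U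

/-- The restriction of the polar form of `Q` to `U` is nondegenerate. -/
def NondegOn (Q : QuadraticForm K V) (U : Submodule K V) : Prop :=
  ∀ u ∈ U, (∀ w ∈ U, polarF Q u w = 0) → u = 0

/-- `f` is orthogonally indecomposable: no invariant subspace `W` with
`0 < dim W < dim V` on which the polar form of `Q` is nondegenerate. -/
def OrthIndec (Q : QuadraticForm K V) (f : V →ₗ[K] V) : Prop :=
  ¬ ∃ W : Submodule K V, Invariant f W ∧ 0 < Module.finrank K W ∧
      Module.finrank K W < Module.finrank K V ∧ NondegOn Q W

/-- The subspace spanned by the `f`-orbit of `x`. -/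
def cyclicSpan (f : V →ₗ[K] V) (x : V) : Submodule K V :=
  Submodule.span K (Set.range fun k : ℕ => (f ^ k) x)

/-- `f` is a cyclic linear map. -/
def IsCyclicEnd (f : V →ₗ[K] V) : Prop := ∃ x : V, cyclicSpan f x = ⊤

/-- `f` is of type 1 with exponent `m`: orthogonally indecomposable, bicyclic, and
with minimal polynomial `(X - 1) ^ m`. -/
def IsType1 (Q : QuadraticForm K V) (f : V →ₗ[K] V) (m : ℕ) : Prop :=
  OrthIndec Q f ∧ 1 ≤ m ∧ minpoly K f = (X - 1) ^ m ∧
    ∃ x z : V, IsCompl (cyclicSpan f x) (cyclicSpan f z)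

/-- Type 1o: type 1 with odd exponent. -/
def IsType1o (Q : QuadraticForm K V) (f : V →ₗ[K] V) : Prop :=
  ∃ m : ℕ, IsType1 Q f m ∧ Odd m

/-- Type 1e: type 1 with even exponent. -/
def IsType1e (Q : QuadraticForm K V) (f : V →ₗ[K] V) : Prop :=
  ∃ m : ℕ, IsType1 Q f m ∧ Even m

/-- The quadratic space `(V,Q)` is hyperbolic. -/
def HyperbolicSpace (Q : QuadraticForm K V) : Prop :=
  ∃ U W : Submodule K V, TotIsotropic Q U ∧ TotIsotropic Q W ∧ IsCompl U W

/-- The transformation `f` is hyperbolic: `V` is a direct sum of two totally isotropic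
`f`-invariant subspaces. -/
def HyperbolicMap (Q : QuadraticForm K V) (f : V →ₗ[K] V) : Prop :=
  ∃ U W : Submodule K V, TotIsotropic Q U ∧ TotIsotropic Q W ∧
    Invariant f U ∧ Invariant f W ∧ IsCompl U W

/-- `f` is semisimple: every invariant subspace has an invariant complement. -/
def SemisimpleEnd (f : V →ₗ[K] V) : Prop :=
  ∀ U : Submodule K V, Invariant f U → ∃ W : Submodule K V, Invariant f W ∧ IsCompl U W

end Defs

theorem stmt9 [Field K] [AddCommGroup V] [Module K V] [FiniteDimensional K V]
    (Q : QuadraticForm K V) (hQ : Nondefective Q)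
    (hchar : ringChar K = 2) (φ : V ≃ₗ[K] V) (hO : InO Q φ)
    (hcyc : IsCyclicEnd φ.toLinearMap) (m : ℕ) (hm : 1 ≤ m)
    (hmin : minpoly K φ.toLinearMap = (Polynomial.X - 1) ^ (2 * m)) :
    LinearMap.range ((φ.toLinearMap - LinearMap.id) ^ (m + 1)) =
      LinearMap.ker ((φ.toLinearMap - LinearMap.id) ^ (m - 1)) ∧
    TotIsotropic Q (LinearMap.range ((φ.toLinearMap - LinearMap.id) ^ (m + 1))) ∧
    LinearMap.range ((φ.toLinearMap - LinearMap.id) ^ m) =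
      LinearMap.ker ((φ.toLinearMap - LinearMap.id) ^ m) ∧
    ¬ TotIsotropic Q (LinearMap.range ((φ.toLinearMap - LinearMap.id) ^ m)) := by
  
  classical
  set N : V →ₗ[K] V := φ.toLinearMap - LinearMap.id with hNdef
  have hNadd : N + 1 = φ.toLinearMap := by
    rw [hNdef, ← Module.End.one_eq_id, sub_add_cancel]
  -- characteristic 2 facts
  have h2 : (2 : K) = 0 := by
    have h := ringChar.Nat.cast_ringChar (R := K)
    rw [hchar] at h
    exact_mod_cast h
  -- N^(2m) = 0
  have hN2m : N ^ (2 * m) = 0 := by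
    have h := minpoly.aeval K φ.toLinearMap
    rw [hmin] at h
    rw [map_pow, map_sub, Polynomial.aeval_X, map_one] at h
    rw [hNdef, ← Module.End.one_eq_id]
    exact h
  have hNbig : ∀ a : ℕ, 2 * m ≤ a → N ^ a = 0 := by
    intro a ha
    have h : N ^ a = N ^ (2 * m) * N ^ (a - 2 * m) := by
      rw [← pow_add]; congr 1; omega
    rw [h, hN2m, zero_mul]
  -- N^(2m-1) ≠ 0
  have hNlow : N ^ (2 * m - 1) ≠ 0 := by
    intro h0
    have haev : Polynomial.aeval φ.toLinearMap ((X - 1 : K[X]) ^ (2 * m - 1)) = 0 := by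
      rw [map_pow, map_sub, Polynomial.aeval_X, map_one]
      rw [hNdef, ← Module.End.one_eq_id] at h0
      exact h0
    have hdvd := minpoly.dvd K φ.toLinearMap haev
    rw [hmin] at hdvd
    have hmonic : ((X : K[X]) - 1).Monic := by
      have := Polynomial.monic_X_sub_C (1 : K)
      rwa [Polynomial.C_1] at this
    have hne : ((X : K[X]) - 1) ^ (2 * m - 1) ≠ 0 := (hmonic.pow _).ne_zero
    have hdeg := Polynomial.natDegree_le_of_dvd hdvd hne
    rw [Polynomial.natDegree_pow, Polynomial.natDegree_pow] at hdeg
    have h1 : ((X : K[X]) - 1).natDegree = 1 := by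
      have := Polynomial.natDegree_X_sub_C (1 : K)
      rwa [Polynomial.C_1] at this
    rw [h1] at hdeg
    omega
  -- cyclic generator
  obtain ⟨x, hx⟩ := hcyc
  set L : K[X] →ₗ[K] V :=
    (LinearMap.applyₗ x).comp (Polynomial.aeval N).toLinearMap with hL
  have hxall : ∀ v : V, ∃ p : K[X], (Polynomial.aeval N p) x = v := by
    intro v
    have hle : cyclicSpan φ.toLinearMap x ≤ LinearMap.range L := by
      rw [cyclicSpan, Submodule.span_le]
      rintro _ ⟨k, rfl⟩
      refine ⟨(X + 1) ^ k, ?_⟩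
      show (Polynomial.aeval N ((X + 1) ^ k)) x = (φ.toLinearMap ^ k) x
      rw [map_pow, map_add, Polynomial.aeval_X, map_one, hNadd]
    have hv : v ∈ cyclicSpan φ.toLinearMap x := by rw [hx]; trivial
    obtain ⟨p, hp⟩ := hle hv
    exact ⟨p, hp⟩
  have hannx : ∀ p : K[X], (Polynomial.aeval N p) x = 0 → Polynomial.aeval N p = 0 := by
    intro p hp
    ext v
    obtain ⟨q, rfl⟩ := hxall v
    rw [LinearMap.zero_apply, ← Module.End.mul_apply, ← map_mul, mul_comm, map_mul,
      Module.End.mul_apply, hp, map_zero]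
  -- minpoly of N is X^(2m)
  have hminN : minpoly K N = (X : K[X]) ^ (2 * m) := by
    have hint : IsIntegral K N := IsIntegral.of_finite K N
    have hdvd : minpoly K N ∣ (X : K[X]) ^ (2 * m) :=
      minpoly.dvd K N (by rw [map_pow, Polynomial.aeval_X, hN2m])
    obtain ⟨i, hi, hassoc⟩ := (dvd_prime_pow Polynomial.prime_X _).mp hdvd
    have heq : minpoly K N = (X : K[X]) ^ i :=
      Polynomial.eq_of_monic_of_associated (minpoly.monic hint) (Polynomial.monic_X_pow _) hassoc
    have hNi : N ^ i = 0 := by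
      have h := minpoly.aeval K N
      rwa [heq, map_pow, Polynomial.aeval_X] at h
    have hi2 : i = 2 * m := by
      by_contra hne
      apply hNlow
      have h' : N ^ (2 * m - 1) = N ^ i * N ^ (2 * m - 1 - i) := by
        rw [← pow_add]; congr 1; omega
      rw [h', hNi, zero_mul]
    rw [heq, hi2]
  have hdvdX : ∀ p : K[X], (Polynomial.aeval N p) x = 0 → (X : K[X]) ^ (2 * m) ∣ p := by
    intro p hp
    rw [← hminN]
    exact minpoly.dvd K N (hannx p hp)
  -- range/ker equalities
  have hker : ∀ a b : ℕ, a + b = 2 * m →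
      LinearMap.range (N ^ a) = LinearMap.ker (N ^ b) := by
    intro a b hab
    apply le_antisymm
    · rintro _ ⟨u, rfl⟩
      rw [LinearMap.mem_ker, ← Module.End.mul_apply, ← pow_add,
        show b + a = 2 * m by omega, hN2m, LinearMap.zero_apply]
    · rintro v hv
      rw [LinearMap.mem_ker] at hv
      obtain ⟨p, rfl⟩ := hxall v
      have h0 : (Polynomial.aeval N ((X : K[X]) ^ b * p)) x = 0 := by
        rw [map_mul, map_pow, Polynomial.aeval_X, Module.End.mul_apply]
        exact hv
      have hXa : (X : K[X]) ^ a ∣ p := by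
        have hb : (X : K[X]) ^ b ≠ 0 := pow_ne_zero _ Polynomial.X_ne_zero
        have hd : (X : K[X]) ^ b * (X : K[X]) ^ a ∣ (X : K[X]) ^ b * p := by
          rw [← pow_add, show b + a = 2 * m by omega]
          exact hdvdX _ h0
        exact (mul_dvd_mul_iff_left hb).mp hd
      obtain ⟨r, hr⟩ := hXa
      refine ⟨(Polynomial.aeval N r) x, ?_⟩
      rw [hr, map_mul, map_pow, Polynomial.aeval_X, Module.End.mul_apply]
  -- polar form identities
  have hNapp : ∀ u : V, N u = φ u - u := by
    intro u; rw [hNdef]; rfl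
  have hphiN : ∀ u : V, N u + u = φ u := by
    intro u; rw [hNapp, sub_add_cancel]
  have hpolar_phi : ∀ u w : V, QuadraticMap.polar ⇑Q (φ u) (φ w) = QuadraticMap.polar ⇑Q u w := by
    intro u w
    unfold QuadraticMap.polar
    rw [← map_add φ, hO, hO, hO]
  have hQN : ∀ u : V, Q (N u) = QuadraticMap.polar ⇑Q (N u) u := by
    intro u
    show Q (N u) = Q (N u + u) - Q (N u) - Q u
    rw [hphiN, hO]
    linear_combination (Q (N u)) * h2
  have hkey : ∀ u w : V, QuadraticMap.polar ⇑Q u (N w) =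
      QuadraticMap.polar ⇑Q (N u) (N w) - QuadraticMap.polar ⇑Q (N u) w := by
    intro u w
    have e1 := hpolar_phi u w
    rw [hNapp u, hNapp w]
    rw [QuadraticMap.polar_sub_left, QuadraticMap.polar_sub_right, QuadraticMap.polar_sub_right,
      QuadraticMap.polar_sub_left]
    linear_combination -e1 + (QuadraticMap.polar ⇑Q (φ u) w + QuadraticMap.polar ⇑Q u (φ w)
      - 2 * QuadraticMap.polar ⇑Q u w) * h2
  have hpolz : ∀ w : V, QuadraticMap.polar ⇑Q (0 : V) w = 0 := by
    intro w
    show Q (0 + w) - Q 0 - Q w = 0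
    rw [zero_add, map_zero]; ring
  have hNpowz : ∀ (u : V) (a : ℕ), 2 * m ≤ a → (N ^ a) u = 0 := by
    intro u a ha
    rw [hNbig a ha, LinearMap.zero_apply]
  have hsucc : ∀ (u : V) (a : ℕ), N ((N ^ a) u) = (N ^ (a + 1)) u := by
    intro u a
    rw [pow_succ', Module.End.mul_apply]
  -- vanishing of T(a,b) for a + b ≥ 2m
  have hT : ∀ (u : V) (b a : ℕ), 2 * m ≤ a + b →
      QuadraticMap.polar ⇑Q ((N ^ a) u) ((N ^ b) u) = 0 := by
    intro u b
    induction b with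
    | zero =>
      intro a ha
      rw [hNpowz u a (by omega), hpolz]
    | succ b ih =>
      have inner : ∀ d a : ℕ, 2 * m - a ≤ d → 2 * m ≤ a + (b + 1) →
          QuadraticMap.polar ⇑Q ((N ^ a) u) ((N ^ (b + 1)) u) = 0 := by
        intro d
        induction d with
        | zero =>
          intro a ha _
          rw [hNpowz u a (by omega), hpolz]
        | succ d ihd =>
          intro a ha hab
          by_cases hca : 2 * m ≤ a
          · rw [hNpowz u a hca, hpolz]
          · have key := hkey ((N ^ a) u) ((N ^ b) u)
            rw [hsucc u b, hsucc u a] at key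
            have key2 := hkey ((N ^ a) u) ((N ^ b) u)
            rw [key]
            have hb1 : N ((N ^ (a+1)) u) = (N ^ (a + 1 + 1)) u := hsucc u (a+1)
            rw [ihd (a + 1) (by omega) (by omega), ih (a + 1) (by omega), sub_zero]
      intro a ha
      exact inner (2 * m) a (by omega) ha
  refine ⟨hker (m + 1) (m - 1) (by omega), ?_, hker m m (by omega), ?_⟩
  · -- totally isotropic
    rintro w ⟨u, rfl⟩
    rw [← hsucc u m, hQN, hsucc u m]
    exact hT u m (m + 1) (by omega)
  · -- not totally isotropic
    intro hiso
    have main : ∀ a, m ≤ a → ∀ b, a + b = 2 * m - 1 →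
        QuadraticMap.polar ⇑Q ((N ^ a) x) ((N ^ b) x) = 0 := by
      intro a ham
      induction a, ham using Nat.le_induction with
      | base =>
        intro b hb
        have hbm : b = m - 1 := by omega
        subst hbm
        have e : N ((N ^ (m - 1)) x) = (N ^ m) x := by
          rw [hsucc x (m - 1), show m - 1 + 1 = m by omega]
        have hq := hQN ((N ^ (m - 1)) x)
        rw [e] at hq
        rw [← hq]
        exact hiso _ ⟨x, rfl⟩
      | succ a ham ih =>
        intro b hb
        have key := hkey ((N ^ a) x) ((N ^ b) x)
        rw [hsucc x b, hsucc x a] at key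
        have h1 := ih (b + 1) (by omega)
        have h2 := hT x (b + 1) (a + 1) (by omega)
        rw [h1, h2] at key
        linear_combination key
    have hlast : ∀ w : V, polarF Q ((N ^ (2 * m - 1)) x) w = 0 := by
      intro w
      obtain ⟨p, rfl⟩ := hxall w
      have hexp : (Polynomial.aeval N p) x =
          ∑ i ∈ Finset.range (p.natDegree + 1), p.coeff i • ((N ^ i) x) := by
        rw [Polynomial.aeval_eq_sum_range]
        rw [LinearMap.sum_apply]
        simp [LinearMap.smul_apply]
      have hbil : polarF Q ((N ^ (2 * m - 1)) x) =
          ⇑((QuadraticMap.polarBilin Q) ((N ^ (2 * m - 1)) x)) := rfl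
      rw [hbil, hexp, map_sum]
      apply Finset.sum_eq_zero
      intro i _
      rw [map_smul]
      have hz : QuadraticMap.polar ⇑Q ((N ^ (2 * m - 1)) x) ((N ^ i) x) = 0 := by
        rcases Nat.eq_zero_or_pos i with hi | hi
        · subst hi
          exact main (2 * m - 1) (by omega) 0 (by omega)
        · exact hT x i (2 * m - 1) (by omega)
      show p.coeff i • (QuadraticMap.polarBilin Q) ((N ^ (2 * m - 1)) x) ((N ^ i) x) = 0
      have : (QuadraticMap.polarBilin Q) ((N ^ (2 * m - 1)) x) ((N ^ i) x)
          = QuadraticMap.polar ⇑Q ((N ^ (2 * m - 1)) x) ((N ^ i) x) := rfl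
      rw [this, hz, smul_zero]
    have hx0 : (N ^ (2 * m - 1)) x = 0 := hQ _ hlast
    apply hNlow
    ext v
    obtain ⟨p, rfl⟩ := hxall v
    rw [LinearMap.zero_apply]
    calc (N ^ (2 * m - 1)) ((Polynomial.aeval N p) x)
        = (Polynomial.aeval N ((X : K[X]) ^ (2 * m - 1) * p)) x := by
          rw [map_mul, map_pow, Polynomial.aeval_X, Module.End.mul_apply]
      _ = (Polynomial.aeval N (p * (X : K[X]) ^ (2 * m - 1))) x := by rw [mul_comm]
      _ = (Polynomial.aeval N p) ((N ^ (2 * m - 1)) x) := by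
          rw [map_mul, map_pow, Polynomial.aeval_X, Module.End.mul_apply]
      _ = 0 := by rw [hx0, map_zero]
end

section
/- Suppose char K = 2. Let φ be a linear automorphism of V preserving f_Q (i.e. f_Q(φu, φw) = f_Q(u,w) for all u, w ∈ V) whose minimal polynomial equals (X − 1)^t for some t ≥ 1, and suppose V = U ⊕ W where U and W are φ-invariant subspaces, each spanned by the φ-orbit of a single vector, and each degenerate (U ∩ U^⊥ ≠ 0 and W ∩ W^⊥ ≠ 0, orthogonal complements taken with respect to f_Q). Then there is no φ-invariant subspace X with 0 < dim X < dim V on which the restriction of f_Q is nondegenerate. -/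
open Polynomial Module

variable {K V : Type*}

/-! Write `N = φ - 1`. For an isometry `φ`, `B (N^c w) u = (-1)^c B w (N^c u)` whenever
`N^(c+1) u = 0`; in characteristic 2 this makes `B (N^c u) w` symmetric in `u, w` on
`ker N^(c+1)`, so `v ↦ B (N^c v) v` is additive there. On a cyclic summand `U` the kernel of `N`
is a line; if `U` is degenerate, its radical is a nonzero `N`-invariant subspace, hence contains
that line, and so `B (N^c u) u = 0` for `u ∈ U ∩ ker N^(c+1)`. By additivity `B (N^c v) v = 0`
on all of `ker N^(c+1)`.
If `X` were a nondegenerate invariant proper subspace, `ker N` (of dimension at most 2) would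
meet both `X` and `X^⊥`, so `ker N ∩ X` is a line. It contains `N^c X`, where `c + 1` is the
nilpotency index of `N` on `X`, so for `v ∈ X` with `N^c v ≠ 0` and any `y ∈ X` we get
`B (N^c v) y = B (N^c y) v ∈ K · B (N^c v) v = 0`: the vector `N^c v` lies in the radical
of `X`. -/

open LinearMap (ker)

section Invariant

variable [Field K] [AddCommGroup V] [Module K V]
  {f : Module.End K V} {U W : Submodule K V}

theorem Invariant.pow (hU : Invariant f U) (k : ℕ) : Invariant (f ^ k) U := by
  induction k with
  | zero => exact fun u hu => hu
  | succ k ih => exact fun u hu => by rw [pow_succ', Module.End.mul_apply]; exact hU _ (ih u hu)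

theorem Invariant.inf (hU : Invariant f U) (hW : Invariant f W) : Invariant f (U ⊓ W) :=
  fun u hu => ⟨hU u hu.1, hW u hu.2⟩

theorem invariant_sub_one_iff : Invariant (f - 1) U ↔ Invariant f U := by
  refine ⟨fun h u hu => ?_, fun h u hu => U.sub_mem (h u hu) hu⟩
  simpa using U.add_mem (h u hu) hu

theorem Invariant.apply_eq_zero_of_isCompl (hU : Invariant f U) (hW : Invariant f W)
    (hUW : IsCompl U W) {u w : V} (hu : u ∈ U) (hw : w ∈ W) (h : f (u + w) = 0) :
    f u = 0 ∧ f w = 0 := by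
  rw [map_add, add_eq_zero_iff_eq_neg] at h
  have hfu : f u = 0 :=
    Submodule.disjoint_def.mp hUW.disjoint _ (hU u hu) (h ▸ W.neg_mem (hW w hw))
  exact ⟨hfu, by simpa [hfu] using h⟩

theorem invariant_cyclicSpan (f : Module.End K V) (x : V) : Invariant f (cyclicSpan f x) := by
  have : cyclicSpan f x ≤ (cyclicSpan f x).comap f := by
    refine Submodule.span_le.mpr ?_
    rintro _ ⟨k, rfl⟩
    exact Submodule.subset_span ⟨k + 1, by simp only [pow_succ', Module.End.mul_apply]⟩
  exact fun u hu => this hu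

theorem mem_cyclicSpan_self (f : Module.End K V) (x : V) : x ∈ cyclicSpan f x :=
  Submodule.subset_span ⟨0, rfl⟩

theorem cyclicSpan_le (hU : Invariant f U) {x : V} (hx : x ∈ U) : cyclicSpan f x ≤ U := by
  refine Submodule.span_le.mpr ?_
  rintro _ ⟨k, rfl⟩
  exact hU.pow k x hx

theorem cyclicSpan_sub_one (f : Module.End K V) (x : V) :
    cyclicSpan (f - 1) x = cyclicSpan f x :=
  le_antisymm
    (cyclicSpan_le (invariant_sub_one_iff.mpr (invariant_cyclicSpan f x)) (mem_cyclicSpan_self f x))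
    (cyclicSpan_le (invariant_sub_one_iff.mp (invariant_cyclicSpan _ x)) (mem_cyclicSpan_self _ x))

theorem cyclicSpan_le_span_sup_map (f : Module.End K V) (x : V) :
    cyclicSpan f x ≤ K ∙ x ⊔ (cyclicSpan f x).map f := by
  refine Submodule.span_le.mpr ?_
  rintro _ ⟨_ | k, rfl⟩
  · exact Submodule.mem_sup_left (Submodule.mem_span_singleton_self x)
  · simp only [pow_succ', Module.End.mul_apply]
    exact Submodule.mem_sup_right (Submodule.mem_map_of_mem (Submodule.subset_span ⟨k, rfl⟩))

variable [FiniteDimensional K V]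

theorem finrank_inf_ker_le_one_of_le_span_sup_map {x : V} (h : U ≤ K ∙ x ⊔ U.map f) :
    finrank K (U ⊓ ker f : Submodule K V) ≤ 1 := by
  have hrank := LinearMap.finrank_range_add_finrank_ker (f.domRestrict U)
  rw [LinearMap.range_domRestrict, LinearMap.ker_domRestrict,
    ← Submodule.finrank_map_subtype_eq, Submodule.map_comap_subtype] at hrank
  have hU := (Submodule.finrank_mono h).trans (Submodule.finrank_add_le_finrank_add_finrank _ _)
  have : finrank K (K ∙ x) ≤ 1 := (finrank_span_le_card ({x} : Set V)).trans (by simp)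
  omega

theorem finrank_inf_ker_cyclicSpan_le_one (f : Module.End K V) (x : V) :
    finrank K (cyclicSpan f x ⊓ ker (f - 1) : Submodule K V) ≤ 1 := by
  rw [← cyclicSpan_sub_one]
  exact finrank_inf_ker_le_one_of_le_span_sup_map (cyclicSpan_le_span_sup_map _ x)

theorem Invariant.finrank_ker_le_of_isCompl (hU : Invariant f U) (hW : Invariant f W)
    (hUW : IsCompl U W) :
    finrank K (ker f) ≤
      finrank K (U ⊓ ker f : Submodule K V) + finrank K (W ⊓ ker f : Submodule K V) := by
  have hker : ker f ≤ U ⊓ ker f ⊔ W ⊓ ker f := by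
    intro v hv
    obtain ⟨u, w, hu, hw, rfl⟩ := Submodule.codisjoint_iff_exists_add_eq.mp hUW.codisjoint v
    obtain ⟨hfu, hfw⟩ := hU.apply_eq_zero_of_isCompl hW hUW hu hw hv
    exact Submodule.add_mem_sup ⟨hu, hfu⟩ ⟨hw, hfw⟩
  exact (Submodule.finrank_mono hker).trans (Submodule.finrank_add_le_finrank_add_finrank _ _)

theorem finrank_inf_le_one_of_disjoint {A X Y : Submodule K V} (hA : finrank K A ≤ 2)
    (hXY : Disjoint X Y) (hYA : Y ⊓ A ≠ ⊥) : finrank K (X ⊓ A : Submodule K V) ≤ 1 := by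
  have hsum := Submodule.finrank_sup_add_finrank_inf_eq (X ⊓ A) (Y ⊓ A)
  rw [(hXY.mono inf_le_left inf_le_left).eq_bot, finrank_bot] at hsum
  have hsup :=
    Submodule.finrank_mono (sup_le (inf_le_right : X ⊓ A ≤ A) (inf_le_right : Y ⊓ A ≤ A))
  have hY := Submodule.one_le_finrank_iff.mpr hYA
  omega

theorem Submodule.exists_smul_eq_of_finrank_le_one {P : Submodule K V} (hP : finrank K P ≤ 1)
    {y e : V} (hy : y ∈ P) (hy0 : y ≠ 0) (he : e ∈ P) : ∃ s : K, s • y = e := by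
  have : P = K ∙ y := Eq.symm <| Submodule.eq_of_le_of_finrank_le
    ((Submodule.span_singleton_le_iff_mem y P).mpr hy) (by rwa [finrank_span_singleton hy0])
  exact Submodule.mem_span_singleton.mp (this ▸ he)

end Invariant

section Nilpotent

variable [Field K] [AddCommGroup V] [Module K V] {N : Module.End K V}

theorem IsNilpotent.exists_pow_succ_eq_zero_pow_ne_zero (hN : IsNilpotent N)
    {X : Submodule K V} (hX : X ≠ ⊥) :
    ∃ c : ℕ, (∀ y ∈ X, (N ^ (c + 1)) y = 0) ∧ ∃ y ∈ X, (N ^ c) y ≠ 0 := by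
  obtain ⟨n, hn⟩ := hN
  by_contra! h
  have hX0 (k : ℕ) (hk : ∀ y ∈ X, (N ^ k) y = 0) : ∀ y ∈ X, y = 0 := by
    induction k with
    | zero => simpa using hk
    | succ k ih => exact ih (h k hk)
  exact hX ((Submodule.eq_bot_iff X).mpr (hX0 n (by simp [hn])))

theorem Invariant.exists_ne_zero_mem_ker (hN : IsNilpotent N) {X : Submodule K V}
    (hX : Invariant N X) (hX0 : X ≠ ⊥) : ∃ y ∈ X, y ≠ 0 ∧ N y = 0 := by
  obtain ⟨c, hc, y, hy, hne⟩ := hN.exists_pow_succ_eq_zero_pow_ne_zero hX0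
  exact ⟨_, hX.pow c y hy, hne, by rw [← Module.End.mul_apply, ← pow_succ', hc y hy]⟩

end Nilpotent

section Isometry

variable [Field K] [AddCommGroup V] [Module K V] {B : LinearMap.BilinForm K V}
  {φ : V ≃ₗ[K] V}

theorem commute_symm_sub_one (φ : V ≃ₗ[K] V) :
    Commute φ.symm.toLinearMap (φ.toLinearMap - 1) :=
  LinearMap.ext fun y => by simp

theorem symm_apply_eq_self_of_sub_one {y : V} (hy : (φ.toLinearMap - 1) y = 0) :
    φ.symm y = y := by
  rw [LinearEquiv.symm_apply_eq, eq_comm, ← sub_eq_zero]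
  exact hy

theorem apply_sub_one_left (hφ : ∀ u w, B (φ u) (φ w) = B u w) (w y : V) :
    B ((φ.toLinearMap - 1) w) y = -B w (φ.symm ((φ.toLinearMap - 1) y)) := by
  have := hφ w (φ.symm y)
  simp only [LinearEquiv.apply_symm_apply] at this
  simp [this]

theorem apply_sub_one_pow_left (hφ : ∀ u w, B (φ u) (φ w) = B u w) {m : ℕ} {u : V}
    (hu : ((φ.toLinearMap - 1) ^ (m + 1)) u = 0) (w : V) :
    B (((φ.toLinearMap - 1) ^ m) w) u = (-1) ^ m * B w (((φ.toLinearMap - 1) ^ m) u) := by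
  set N := φ.toLinearMap - 1
  have hcomm (k : ℕ) (y : V) : (N ^ k) (φ.symm y) = φ.symm ((N ^ k) y) :=
    (LinearMap.congr_fun (((commute_symm_sub_one φ).pow_right k).eq) y).symm
  induction m generalizing u with
  | zero => simp
  | succ m ih =>
    have hu' : (N ^ (m + 1)) (φ.symm (N u)) = 0 := by
      rw [hcomm, ← Module.End.mul_apply, ← pow_succ, hu, map_zero]
    have hfix : φ.symm ((N ^ (m + 1)) u) = (N ^ (m + 1)) u :=
      symm_apply_eq_self_of_sub_one (by rw [← Module.End.mul_apply, ← pow_succ', hu])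
    calc B ((N ^ (m + 1)) w) u = B (N ((N ^ m) w)) u := by rw [pow_succ', Module.End.mul_apply]
      _ = -B ((N ^ m) w) (φ.symm (N u)) := apply_sub_one_left hφ _ _
      _ = -((-1) ^ m * B w ((N ^ m) (φ.symm (N u)))) := by rw [ih hu']
      _ = (-1) ^ (m + 1) * B w ((N ^ (m + 1)) u) := by
        rw [hcomm, ← Module.End.mul_apply, ← pow_succ, hfix]
        ring

theorem apply_sub_one_pow_comm [CharP K 2] (hB : B.IsSymm)
    (hφ : ∀ u w, B (φ u) (φ w) = B u w) {m : ℕ} {u : V}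
    (hu : ((φ.toLinearMap - 1) ^ (m + 1)) u = 0) (w : V) :
    B (((φ.toLinearMap - 1) ^ m) w) u = B (((φ.toLinearMap - 1) ^ m) u) w := by
  rw [apply_sub_one_pow_left hφ hu, CharTwo.neg_eq, one_pow, one_mul, hB.eq]

theorem apply_sub_one_pow_self_eq_zero [CharP K 2] (hB : B.IsSymm)
    (hφ : ∀ u w, B (φ u) (φ w) = B u w) {U W : Submodule K V}
    (hU : Invariant φ.toLinearMap U) (hW : Invariant φ.toLinearMap W) (hUW : IsCompl U W)
    (hUrad : U ⊓ ker (φ.toLinearMap - 1) ≤ B.orthogonal U)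
    (hWrad : W ⊓ ker (φ.toLinearMap - 1) ≤ B.orthogonal W) {c : ℕ} {v : V}
    (hv : ((φ.toLinearMap - 1) ^ (c + 1)) v = 0) :
    B (((φ.toLinearMap - 1) ^ c) v) v = 0 := by
  set N := φ.toLinearMap - 1
  have hdiag {S : Submodule K V} (hS : Invariant φ.toLinearMap S)
      (hrad : S ⊓ ker N ≤ B.orthogonal S) {s : V} (hs : s ∈ S) (hNs : (N ^ (c + 1)) s = 0) :
      B ((N ^ c) s) s = 0 := by
    rw [hB.eq]
    refine hrad ⟨(invariant_sub_one_iff.mpr hS).pow c s hs, LinearMap.mem_ker.mpr ?_⟩ s hs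
    rwa [← Module.End.mul_apply, ← pow_succ']
  obtain ⟨u, w, hu, hw, rfl⟩ := Submodule.codisjoint_iff_exists_add_eq.mp hUW.codisjoint v
  obtain ⟨hNu, hNw⟩ := ((invariant_sub_one_iff.mpr hU).pow (c + 1)).apply_eq_zero_of_isCompl
    ((invariant_sub_one_iff.mpr hW).pow (c + 1)) hUW hu hw hv
  have hcross : B ((N ^ c) w) u = B ((N ^ c) u) w := apply_sub_one_pow_comm hB hφ hNu w
  simp only [map_add, LinearMap.add_apply, hdiag hU hUrad hu hNu, hdiag hW hWrad hw hNw, hcross]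
  simpa using CharTwo.add_self_eq_zero (B ((N ^ c) u) w)

theorem LinearMap.BilinForm.IsSymm.inf_orthogonal_ne_bot_iff (hB : B.IsSymm)
    {U : Submodule K V} :
    U ⊓ B.orthogonal U ≠ ⊥ ↔ ∃ u ∈ U, u ≠ 0 ∧ ∀ w ∈ U, B u w = 0 := by
  simp only [Submodule.ne_bot_iff, Submodule.mem_inf, LinearMap.BilinForm.mem_orthogonal_iff,
    hB.eq _ _]
  exact exists_congr fun _ => and_assoc.trans (and_congr_right fun _ => and_comm)

variable [FiniteDimensional K V]

theorem Invariant.symm_mem {X : Submodule K V}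
    (hX : Invariant φ.toLinearMap X) {y : V} (hy : y ∈ X) : φ.symm y ∈ X := by
  have hmap : X.map φ.toLinearMap = X :=
    Submodule.eq_of_le_of_finrank_le (Submodule.map_le_iff_le_comap.mpr hX)
      (LinearEquiv.finrank_map_eq φ X).ge
  obtain ⟨z, hz, rfl⟩ := hmap.symm ▸ hy
  simpa using hz

theorem Invariant.orthogonal (hφ : ∀ u w, B (φ u) (φ w) = B u w)
    {X : Submodule K V} (hX : Invariant φ.toLinearMap X) :
    Invariant φ.toLinearMap (B.orthogonal X) := by
  intro v hv y hy
  simpa [← hφ (φ.symm y) v] using hv _ (hX.symm_mem hy)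

theorem inf_ker_le_orthogonal (hφ : ∀ u w, B (φ u) (φ w) = B u w)
    (hN : IsNilpotent (φ.toLinearMap - 1)) {U : Submodule K V}
    (hU : Invariant φ.toLinearMap U)
    (hUker : finrank K (U ⊓ ker (φ.toLinearMap - 1) : Submodule K V) ≤ 1)
    (hdeg : U ⊓ B.orthogonal U ≠ ⊥) :
    U ⊓ ker (φ.toLinearMap - 1) ≤ B.orthogonal U := by
  obtain ⟨y, hy, hy0, hNy⟩ :=
    (invariant_sub_one_iff.mpr (hU.inf (hU.orthogonal hφ))).exists_ne_zero_mem_ker hN hdeg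
  intro e he
  obtain ⟨s, rfl⟩ := Submodule.exists_smul_eq_of_finrank_le_one hUker ⟨hy.1, hNy⟩ hy0 he
  exact Submodule.smul_mem _ s hy.2

theorem pow_apply_mem_orthogonal [CharP K 2] (hB : B.IsSymm)
    (hφ : ∀ u w, B (φ u) (φ w) = B u w) {X : Submodule K V}
    (hX : Invariant (φ.toLinearMap - 1) X)
    (hXker : finrank K (X ⊓ ker (φ.toLinearMap - 1) : Submodule K V) ≤ 1) {c : ℕ}
    (hc : ∀ y ∈ X, ((φ.toLinearMap - 1) ^ (c + 1)) y = 0) {v : V} (hv : v ∈ X)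
    (hv0 : ((φ.toLinearMap - 1) ^ c) v ≠ 0) (hvv : B (((φ.toLinearMap - 1) ^ c) v) v = 0) :
    ((φ.toLinearMap - 1) ^ c) v ∈ B.orthogonal X := by
  set N := φ.toLinearMap - 1
  have hmem {y : V} (hy : y ∈ X) : (N ^ c) y ∈ X ⊓ ker N :=
    ⟨hX.pow c y hy,
      LinearMap.mem_ker.mpr (by rw [← Module.End.mul_apply, ← pow_succ', hc y hy])⟩
  intro y hy
  obtain ⟨s, hs⟩ := Submodule.exists_smul_eq_of_finrank_le_one hXker (hmem hv) hv0 (hmem hy)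
  rw [hB.eq, apply_sub_one_pow_comm hB hφ (hc y hy), ← hs, map_smul, LinearMap.smul_apply, hvv,
    smul_zero]

theorem inf_orthogonal_ne_bot [CharP K 2] (hB : B.IsSymm) (hφ : ∀ u w, B (φ u) (φ w) = B u w)
    (hN : IsNilpotent (φ.toLinearMap - 1)) (hker : finrank K (ker (φ.toLinearMap - 1)) ≤ 2)
    (hdiag : ∀ (c : ℕ) (v : V), ((φ.toLinearMap - 1) ^ (c + 1)) v = 0 →
      B (((φ.toLinearMap - 1) ^ c) v) v = 0)
    {X : Submodule K V} (hX : Invariant φ.toLinearMap X) (hX0 : X ≠ ⊥)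
    (hXV : finrank K X < finrank K V) : X ⊓ B.orthogonal X ≠ ⊥ := by
  intro hdisj
  have hperp : B.orthogonal X ≠ ⊥ := by
    intro h
    have := LinearMap.BilinForm.finrank_add_finrank_orthogonal' (B := B) X
    rw [h, finrank_bot] at this
    omega
  obtain ⟨y, hy, hy0, hNy⟩ :=
    (invariant_sub_one_iff.mpr (hX.orthogonal hφ)).exists_ne_zero_mem_ker hN hperp
  have hXker := finrank_inf_le_one_of_disjoint hker (disjoint_iff.mpr hdisj)
    ((Submodule.ne_bot_iff _).mpr ⟨y, ⟨hy, hNy⟩, hy0⟩)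
  obtain ⟨c, hc, v, hv, hv0⟩ := hN.exists_pow_succ_eq_zero_pow_ne_zero hX0
  have hXN := invariant_sub_one_iff.mpr hX
  exact hv0 ((Submodule.eq_bot_iff _).mp hdisj _ ⟨hXN.pow c v hv,
    pow_apply_mem_orthogonal hB hφ hXN hXker hc hv hv0 (hdiag c v (hc v hv))⟩)

end Isometry

theorem stmt13_general [Field K] [AddCommGroup V] [Module K V] [FiniteDimensional K V]
    (Q : QuadraticForm K V)
    (hchar : ringChar K = 2) (φ : V ≃ₗ[K] V)
    (hpres : ∀ u w : V, polarF Q (φ u) (φ w) = polarF Q u w)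
    (t : ℕ) (hmin : minpoly K φ.toLinearMap = (Polynomial.X - 1) ^ t)
    (x z : V)
    (hcompl : IsCompl (cyclicSpan φ.toLinearMap x) (cyclicSpan φ.toLinearMap z))
    (hUdeg : ∃ u ∈ cyclicSpan φ.toLinearMap x, u ≠ 0 ∧
        ∀ w ∈ cyclicSpan φ.toLinearMap x, polarF Q u w = 0)
    (hWdeg : ∃ u ∈ cyclicSpan φ.toLinearMap z, u ≠ 0 ∧
        ∀ w ∈ cyclicSpan φ.toLinearMap z, polarF Q u w = 0) :
    OrthIndec Q φ.toLinearMap := by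
  have : CharP K 2 := ringChar.of_eq hchar
  set B : LinearMap.BilinForm K V := QuadraticMap.polarBilin Q
  have hB : B.IsSymm := ⟨QuadraticMap.polar_comm Q⟩
  have hφ : ∀ u w, B (φ u) (φ w) = B u w := hpres
  have hN : IsNilpotent (φ.toLinearMap - 1) :=
    ⟨t, by simpa [hmin] using minpoly.aeval K φ.toLinearMap⟩
  have hrad (y : V) (hdeg : ∃ u ∈ cyclicSpan φ.toLinearMap y, u ≠ 0 ∧
      ∀ w ∈ cyclicSpan φ.toLinearMap y, polarF Q u w = 0) :
      cyclicSpan φ.toLinearMap y ⊓ ker (φ.toLinearMap - 1) ≤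
        B.orthogonal (cyclicSpan φ.toLinearMap y) :=
    inf_ker_le_orthogonal hφ hN (invariant_cyclicSpan _ y)
      (finrank_inf_ker_cyclicSpan_le_one _ y) (hB.inf_orthogonal_ne_bot_iff.mpr hdeg)
  have hker : finrank K (ker (φ.toLinearMap - 1)) ≤ 2 :=
    ((invariant_sub_one_iff.mpr (invariant_cyclicSpan _ x)).finrank_ker_le_of_isCompl
      (invariant_sub_one_iff.mpr (invariant_cyclicSpan _ z)) hcompl).trans
      (add_le_add (finrank_inf_ker_cyclicSpan_le_one _ x) (finrank_inf_ker_cyclicSpan_le_one _ z))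
  rintro ⟨X, hX, hXpos, hXV, hXnd⟩
  obtain ⟨u, hu, hu0, huX⟩ := hB.inf_orthogonal_ne_bot_iff.mp <|
    inf_orthogonal_ne_bot hB hφ hN hker
      (fun _ _ => apply_sub_one_pow_self_eq_zero hB hφ (invariant_cyclicSpan _ x)
        (invariant_cyclicSpan _ z) hcompl (hrad x hUdeg) (hrad z hWdeg))
      hX (Submodule.one_le_finrank_iff.mp hXpos) hXV
  exact hu0 (hXnd u hu huX)

theorem stmt13 [Field K] [AddCommGroup V] [Module K V] [FiniteDimensional K V]
    (Q : QuadraticForm K V) (hQ : Nondefective Q)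
    (hchar : ringChar K = 2) (φ : V ≃ₗ[K] V)
    (hpres : ∀ u w : V, polarF Q (φ u) (φ w) = polarF Q u w)
    (t : ℕ) (ht : 1 ≤ t) (hmin : minpoly K φ.toLinearMap = (Polynomial.X - 1) ^ t)
    (x z : V)
    (hcompl : IsCompl (cyclicSpan φ.toLinearMap x) (cyclicSpan φ.toLinearMap z))
    (hUdeg : ∃ u ∈ cyclicSpan φ.toLinearMap x, u ≠ 0 ∧
        ∀ w ∈ cyclicSpan φ.toLinearMap x, polarF Q u w = 0)
    (hWdeg : ∃ u ∈ cyclicSpan φ.toLinearMap z, u ≠ 0 ∧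
        ∀ w ∈ cyclicSpan φ.toLinearMap z, polarF Q u w = 0) :
    OrthIndec Q φ.toLinearMap :=
  stmt13_general Q hchar φ hpres t hmin x z hcompl hUdeg hWdeg
end

section
/- Let φ ∈ O(V,Q) and let T be a totally isotropic φ-invariant subspace of V with 2·dim T = dim V. Then φ ∈ SO(V,Q), i.e. dim(im(φ − 1)) is even. -/
open Polynomial Module

variable {K V : Type*}

/-! Put `f = φ - 1` and let `B` be the polar form. Since `φ` is an isometry, `(im f)ᗮ = ker f`,
and `Tᗮ = T` because `T` is a Lagrangian. On `U = f⁻¹(T)` the form `(u, w) ↦ B u (f w)` is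
alternating, as `B u (f u) = -Q (f u)`, and its radical is `(im f ⊓ T)ᗮ = ker f ⊔ T`. The rank of
an alternating form is even, and counting dimensions gives
`rank = dim U - dim (ker f ⊔ T) = 2 dim (im f ⊓ T) - dim im f`. -/

namespace LinearMap.BilinForm.IsAlt

variable {M : Type*} [Field K] [AddCommGroup M] [Module K M] {B : LinearMap.BilinForm K M}

theorem exists_finrank_eq_two_restrict_nondegenerate [Nontrivial M] (hB : B.IsAlt)
    (hnd : B.Nondegenerate) :
    ∃ P : Submodule K M, finrank K P = 2 ∧ (B.restrict P).Nondegenerate := by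
  obtain ⟨x, hx⟩ := exists_ne (0 : M)
  obtain ⟨y₀, hy₀⟩ : ∃ y, B x y ≠ 0 := by
    by_contra! h
    exact hx (hnd.1 x h)
  set y := (B x y₀)⁻¹ • y₀
  have hxy : B x y = 1 := by simp [y, hy₀]
  have hyx : B y x = -1 := by rw [← hB.neg_eq x y, hxy]
  have hli : LinearIndependent K ![x, y] := by
    refine (LinearIndependent.pair_iff' hx).mpr fun a ha => ?_
    simp [← ha, hB.self_eq_zero] at hxy
  refine ⟨Submodule.span K {x, y}, ?_, ?_⟩
  · rw [← Matrix.range_cons_cons_empty x y ![], finrank_span_eq_card hli, Fintype.card_fin]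
  refine B.nondegenerate_restrict_of_disjoint_orthogonal hB.isRefl ?_
  rw [Submodule.disjoint_def]
  intro p hp hpo
  obtain ⟨a, b, rfl⟩ := Submodule.mem_span_pair.mp hp
  have hb := hpo x (Submodule.subset_span (by simp))
  have ha := hpo y (Submodule.subset_span (by simp))
  simp only [map_add, map_smul, hB.self_eq_zero, hxy, hyx, smul_eq_mul] at ha hb
  simp_all

theorem even_finrank_of_nondegenerate [FiniteDimensional K M] (hB : B.IsAlt)
    (hnd : B.Nondegenerate) : Even (finrank K M) := by
  induction hn : finrank K M using Nat.strong_induction_on generalizing M B with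
  | _ n ih =>
  rcases n.eq_zero_or_pos with rfl | hpos
  · exact ⟨0, rfl⟩
  have : Nontrivial M := Module.nontrivial_of_finrank_pos (hn ▸ hpos)
  obtain ⟨P, hP, hPnd⟩ := exists_finrank_eq_two_restrict_nondegenerate hB hnd
  have hcompl := isCompl_orthogonal_of_restrict_nondegenerate hB.isRefl hPnd
  have hOnd : (B.restrict (B.orthogonal P)).Nondegenerate := by
    refine B.nondegenerate_restrict_of_disjoint_orthogonal hB.isRefl ?_
    rw [orthogonal_orthogonal hnd hB.isRefl]
    exact hcompl.disjoint.symm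
  have hsum := Submodule.finrank_add_eq_of_isCompl hcompl
  obtain ⟨m, hm⟩ := ih _ (by omega) (B := B.restrict (B.orthogonal P)) (fun x => hB x) hOnd rfl
  exact ⟨m + 1, by omega⟩

theorem even_finrank_range [FiniteDimensional K M] (hB : B.IsAlt) :
    Even (finrank K (LinearMap.range B)) := by
  obtain ⟨C, hC⟩ := (LinearMap.ker B).exists_isCompl
  have hker : LinearMap.ker (B.restrict C) = ⊥ := by
    rw [ker_restrict_eq_of_codisjoint hC.codisjoint.symm fun x _ y hy => by
      rw [← hB.neg_eq y x, LinearMap.mem_ker.mp hy, LinearMap.zero_apply, neg_zero]]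
    exact Submodule.disjoint_iff_comap_eq_bot.mp hC.disjoint.symm
  have hCnd : (B.restrict C).Nondegenerate :=
    (IsRefl.nondegenerate_iff_separatingLeft (B := B.restrict C) fun x y => hB.isRefl x y).mpr
      (LinearMap.separatingLeft_iff_ker_eq_bot.mpr hker)
  have hrank := LinearMap.finrank_range_add_finrank_ker B
  have hsum := Submodule.finrank_add_eq_of_isCompl hC
  have := even_finrank_of_nondegenerate (B := B.restrict C) (fun x => hB x) hCnd
  rwa [show finrank K (LinearMap.range B) = finrank K C by omega]

end LinearMap.BilinForm.IsAlt

theorem LinearMap.BilinForm.orthogonal_sup {R M : Type*} [CommSemiring R] [AddCommMonoid M]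
    [Module R M] (B : LinearMap.BilinForm R M) (N L : Submodule R M) :
    B.orthogonal (N ⊔ L) = B.orthogonal N ⊓ B.orthogonal L := by
  refine le_antisymm (le_inf (orthogonal_le le_sup_left) (orthogonal_le le_sup_right)) ?_
  rintro x ⟨hN, hL⟩ _ hy
  obtain ⟨a, ha, c, hc, rfl⟩ := Submodule.mem_sup.mp hy
  rw [map_add, LinearMap.add_apply, hN a ha, hL c hc, add_zero]

namespace QuadraticMap

variable {R M N : Type*} [CommRing R] [AddCommGroup M] [AddCommGroup N] [Module R M] [Module R N]

theorem polarBilin_comm (Q : QuadraticMap R M N) (u w : M) :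
    Q.polarBilin u w = Q.polarBilin w u :=
  polar_comm _ _ _

theorem polarBilin_isRefl (Q : QuadraticMap R M N) : Q.polarBilin.IsRefl :=
  fun u w h => by rwa [Q.polarBilin_comm]

end QuadraticMap

section Orthogonal

open LinearMap (ker range)
open LinearMap.BilinForm

variable [Field K] [AddCommGroup V] [Module K V] {Q : QuadraticForm K V}

theorem Nondefective.polarBilin_nondegenerate (hQ : Nondefective Q) :
    Q.polarBilin.Nondegenerate :=
  Q.polarBilin_isRefl.nondegenerate_iff_separatingLeft.mpr hQ

theorem TotIsotropic.polarBilin_eq_zero {T : Submodule K V} (hT : TotIsotropic Q T) {a b : V}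
    (ha : a ∈ T) (hb : b ∈ T) : Q.polarBilin a b = 0 := by
  simp [QuadraticMap.polar, hT a ha, hT b hb, hT _ (T.add_mem ha hb)]

theorem TotIsotropic.orthogonal_eq_self [FiniteDimensional K V] {T : Submodule K V}
    (hnd : Q.polarBilin.Nondegenerate) (hT : TotIsotropic Q T)
    (hdim : 2 * finrank K T = finrank K V) : orthogonal Q.polarBilin T = T := by
  refine (Submodule.eq_of_le_of_finrank_le ?_ ?_).symm
  · exact fun t ht a ha => hT.polarBilin_eq_zero ha ht
  · rw [finrank_orthogonal hnd]
    omega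

variable {φ : V ≃ₗ[K] V}

theorem InO.polarBilin_map_map (hO : InO Q φ) (u w : V) :
    Q.polarBilin (φ u) (φ w) = Q.polarBilin u w := by
  simp only [QuadraticMap.polarBilin_apply_apply, QuadraticMap.polar, ← map_add, hO _]

theorem InO.polarBilin_sub_self_left (hO : InO Q φ) (u w : V) :
    Q.polarBilin (φ u - u) w = -Q.polarBilin (φ u) (φ w - w) := by
  simp only [map_sub, LinearMap.sub_apply, hO.polarBilin_map_map]
  ring

theorem InO.polarBilin_self_sub_self (hO : InO Q φ) (u : V) :
    Q.polarBilin u (φ u - u) = -Q (φ u - u) := by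
  rw [QuadraticMap.polarBilin_apply_apply, QuadraticMap.polar, add_sub_cancel, hO]
  ring

theorem InO.orthogonal_range_sub_one (hnd : Q.polarBilin.Nondegenerate) (hO : InO Q φ) :
    orthogonal Q.polarBilin (range (φ.toLinearMap - LinearMap.id)) =
      ker (φ.toLinearMap - LinearMap.id) := by
  ext x
  simp only [mem_orthogonal_iff, LinearMap.mem_range, LinearMap.mem_ker, forall_exists_index,
    forall_apply_eq_imp_iff, LinearMap.sub_apply, LinearEquiv.coe_coe, LinearMap.id_apply,
    hO.polarBilin_sub_self_left, neg_eq_zero]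
  exact ⟨fun h => hnd.2 _ fun w => by simpa using h (φ.symm w),
    fun h u => by rw [h, map_zero]⟩

variable {T : Submodule K V}

theorem InO.orthogonal_range_sub_one_inf [FiniteDimensional K V]
    (hnd : Q.polarBilin.Nondegenerate) (hO : InO Q φ) (hTT : orthogonal Q.polarBilin T = T) :
    orthogonal Q.polarBilin (range (φ.toLinearMap - LinearMap.id) ⊓ T) =
      ker (φ.toLinearMap - LinearMap.id) ⊔ T := by
  have hrange : range (φ.toLinearMap - LinearMap.id) ⊓ T =
      orthogonal Q.polarBilin (ker (φ.toLinearMap - LinearMap.id) ⊔ T) := by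
    rw [orthogonal_sup, ← hO.orthogonal_range_sub_one hnd,
      orthogonal_orthogonal hnd Q.polarBilin_isRefl, hTT]
  rw [hrange, orthogonal_orthogonal hnd Q.polarBilin_isRefl]

theorem InO.isAlt_restrict_comap_sub_one (hO : InO Q φ) (hT : TotIsotropic Q T) :
    (restrict (Q.polarBilin.compl₂ (φ.toLinearMap - LinearMap.id))
      (T.comap (φ.toLinearMap - LinearMap.id))).IsAlt := by
  rintro ⟨u, hu⟩
  exact (hO.polarBilin_self_sub_self u).trans (neg_eq_zero.mpr (hT _ hu))

theorem InO.ker_restrict_comap_sub_one [FiniteDimensional K V]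
    (hnd : Q.polarBilin.Nondegenerate) (hO : InO Q φ) (hTT : orthogonal Q.polarBilin T = T) :
    ker (restrict (Q.polarBilin.compl₂ (φ.toLinearMap - LinearMap.id))
      (T.comap (φ.toLinearMap - LinearMap.id))) =
      (ker (φ.toLinearMap - LinearMap.id) ⊔ T).comap
        (T.comap (φ.toLinearMap - LinearMap.id)).subtype := by
  ext ⟨x, hx⟩
  rw [Submodule.mem_comap, Submodule.subtype_apply, ← hO.orthogonal_range_sub_one_inf hnd hTT,
    ← Submodule.map_comap_eq, LinearMap.mem_ker, mem_orthogonal_iff]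
  simp [LinearMap.ext_iff, Q.polarBilin_comm x]

theorem InO.even_finrank_range_sub_one [FiniteDimensional K V]
    (hnd : Q.polarBilin.Nondegenerate) (hO : InO Q φ) (hT : TotIsotropic Q T)
    (hTT : orthogonal Q.polarBilin T = T) (hinv : Invariant φ.toLinearMap T) :
    Even (finrank K (range (φ.toLinearMap - LinearMap.id))) := by
  obtain ⟨r, hr⟩ := (hO.isAlt_restrict_comap_sub_one hT).even_finrank_range
  have hR := finrank_orthogonal hnd (range (φ.toLinearMap - LinearMap.id) ⊓ T)
  rw [hO.orthogonal_range_sub_one_inf hnd hTT] at hR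
  set f := φ.toLinearMap - LinearMap.id
  set U := T.comap f
  have hRU : ker f ⊔ T ≤ U := sup_le (fun x hx => by simp [U, LinearMap.mem_ker.mp hx])
    fun t ht => T.sub_mem (hinv t ht) ht
  have hrank := LinearMap.finrank_range_add_finrank_ker (restrict (Q.polarBilin.compl₂ f) U)
  rw [hO.ker_restrict_comap_sub_one hnd hTT, (Submodule.comapSubtypeEquivOfLe hRU).finrank_eq]
    at hrank
  have hU := LinearMap.finrank_range_add_finrank_ker (f.domRestrict U)
  rw [LinearMap.range_domRestrict, Submodule.map_comap_eq, LinearMap.ker_domRestrict,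
    (Submodule.comapSubtypeEquivOfLe (le_sup_left.trans hRU)).finrank_eq] at hU
  have hf := LinearMap.finrank_range_add_finrank_ker f
  have := Submodule.finrank_le (range f ⊓ T)
  exact ⟨finrank K (range f ⊓ T : Submodule K V) - r, by omega⟩

end Orthogonal

theorem stmt16 [Field K] [AddCommGroup V] [Module K V] [FiniteDimensional K V]
    (Q : QuadraticForm K V) (hQ : Nondefective Q)
    (φ : V ≃ₗ[K] V) (hO : InO Q φ)
    (T : Submodule K V) (hT : TotIsotropic Q T) (hinv : Invariant φ.toLinearMap T)
    (hdim : 2 * Module.finrank K T = Module.finrank K V) :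
    Even (Module.finrank K (LinearMap.range (φ.toLinearMap - LinearMap.id))) :=
  have hnd := hQ.polarBilin_nondegenerate
  hO.even_finrank_range_sub_one hnd hT (hT.orthogonal_eq_self hnd hdim) hinv
end

section
/- Suppose char K ≠ 2 and φ ∈ O(V,Q) has no orthogonal summand of odd dimension, i.e. there is no nonzero φ-invariant subspace U of V of odd dimension on which the restriction of f_Q is nondegenerate. Then every ξ ∈ O(V,Q) with ξφ = φξ lies in SO(V,Q). -/
open Polynomial Module

variable {K V : Type*}

section Aux

variable [Field K] [AddCommGroup V] [Module K V]

private lemma polar_map_of_inO {Q : QuadraticForm K V} {e : V ≃ₗ[K] V} (h : InO Q e) (x y : V) :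
    QuadraticMap.polar ⇑Q (e x) (e y) = QuadraticMap.polar ⇑Q x y := by
  unfold QuadraticMap.polar
  rw [← map_add, h, h, h]

private lemma even_finrank_of_skew {A : Type*} [AddCommGroup A] [Module K A]
    [FiniteDimensional K A] (hchar : ringChar K ≠ 2) (g : A →ₗ[K] A →ₗ[K] K)
    (hskew : ∀ x y, g x y = - g y x)
    (hnd : ∀ x : A, (∀ y : A, g x y = 0) → x = 0) :
    Even (Module.finrank K A) := by
  classical
  have h2 : (2 : K) ≠ 0 := Ring.two_ne_zero hchar
  set n := Module.finrank K A with hn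
  let b := Module.finBasis K A
  let M : Matrix (Fin n) (Fin n) K := Matrix.of fun i j => g (b i) (b j)
  have hM : ∀ i j, M i j = g (b i) (b j) := fun _ _ => rfl
  have hdet : M.det ≠ 0 := by
    intro h0
    obtain ⟨v, hv, hvM⟩ := Matrix.exists_vecMul_eq_zero_iff.mpr h0
    have hx : (∑ i, v i • b i) = 0 := by
      apply hnd
      intro y
      have hgx : g (∑ i, v i • b i) = 0 := by
        apply b.ext
        intro j
        have hj := congrFun hvM j
        simp only [Matrix.vecMul, dotProduct, hM, Pi.zero_apply] at hj
        simpa [map_sum, LinearMap.sum_apply, smul_eq_mul] using hj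
      rw [hgx]
      rfl
    apply hv
    funext i
    exact Fintype.linearIndependent_iff.mp b.linearIndependent v hx i
  rcases Nat.even_or_odd n with he | ho
  · exact he
  exfalso
  have hMT : M.transpose = -M := by
    ext i j
    rw [Matrix.transpose_apply, Matrix.neg_apply, hM, hM]
    exact hskew (b j) (b i)
  have hd : M.det = - M.det := by
    conv_lhs => rw [← Matrix.det_transpose, hMT]
    rw [Matrix.det_neg, Fintype.card_fin, ho.neg_one_pow]
    ring
  apply hdet
  have h2d : (2 : K) * M.det = 0 := by linear_combination hd
  rcases mul_eq_zero.mp h2d with h | h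
  · exact absurd h h2
  · exact h

end Aux

theorem stmt18 [Field K] [AddCommGroup V] [Module K V] [FiniteDimensional K V]
    (Q : QuadraticForm K V) (hQ : Nondefective Q)
    (hchar : ringChar K ≠ 2) (φ : V ≃ₗ[K] V) (hO : InO Q φ)
    (hsummands : ¬ ∃ U : Submodule K V, U ≠ ⊥ ∧ Invariant φ.toLinearMap U ∧
      Odd (Module.finrank K U) ∧ NondegOn Q U) :
    ∀ ξ : V ≃ₗ[K] V, InO Q ξ → ξ * φ = φ * ξ → InSO Q ξ := by
  classical
  intro ξ hξO hcomm
  refine ⟨hξO, ?_⟩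
  have h2 : (2 : K) ≠ 0 := Ring.two_ne_zero hchar
  set n := Module.finrank K V with hn
  set u : V →ₗ[K] V := ξ.toLinearMap - LinearMap.id with hu
  have huapp : ∀ v : V, u v = ξ v - v := fun v => rfl
  have hcomm' : ∀ v : V, ξ (φ v) = φ (ξ v) := fun v =>
    congrArg (fun e : V ≃ₗ[K] V => e v) hcomm
  have hφu : ∀ v : V, u (φ v) = φ (u v) := by
    intro v
    rw [huapp, huapp, map_sub, hcomm']
  have hξu : ∀ v : V, u (ξ v) = ξ (u v) := by
    intro v
    rw [huapp, huapp, map_sub]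
  have hsymm_u : ∀ v : V, u (ξ.symm v) = ξ.symm (u v) := by
    intro v
    have h1 := hξu (ξ.symm v)
    rw [ξ.apply_symm_apply] at h1
    have h2' : ξ.symm (u v) = u (ξ.symm v) := by rw [h1, ξ.symm_apply_apply]
    exact h2'.symm
  have hpow_u : ∀ k : ℕ, ∀ v : V, (u ^ k) (u v) = u ((u ^ k) v) := by
    intro k v
    have h := ((Commute.refl u).pow_left k).eq
    calc (u ^ k) (u v) = ((u ^ k) * u) v := rfl
      _ = (u * (u ^ k)) v := by rw [h]
      _ = u ((u ^ k) v) := rfl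
  have hpow_sym : ∀ k : ℕ, ∀ v : V, (u ^ k) (ξ.symm v) = ξ.symm ((u ^ k) v) := by
    intro k
    induction k with
    | zero => intro v; simp
    | succ k ih =>
      intro v
      rw [pow_succ]
      calc (u ^ k * u) (ξ.symm v) = (u ^ k) (u (ξ.symm v)) := rfl
        _ = (u ^ k) (ξ.symm (u v)) := by rw [hsymm_u]
        _ = ξ.symm ((u ^ k) (u v)) := ih _
        _ = ξ.symm ((u ^ k * u) v) := rfl
  have hpow_phi : ∀ k : ℕ, ∀ v : V, (u ^ k) (φ v) = φ ((u ^ k) v) := by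
    intro k
    induction k with
    | zero => intro v; simp
    | succ k ih =>
      intro v
      rw [pow_succ]
      calc (u ^ k * u) (φ v) = (u ^ k) (u (φ v)) := rfl
        _ = (u ^ k) (φ (u v)) := by rw [hφu]
        _ = φ ((u ^ k) (u v)) := ih _
        _ = φ ((u ^ k * u) v) := rfl
  set A := LinearMap.ker (u ^ n) with hA
  set B := LinearMap.range (u ^ n) with hB
  have hker_le : ∀ m : ℕ, n ≤ m → LinearMap.ker (u ^ m) = A := by
    intro m hm
    rw [hn] at hm
    have := Module.End.ker_pow_eq_ker_pow_finrank_of_le (f := u) hm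
    rw [hA, hn]
    exact this
  -- range stabilization
  have hrange_succ : LinearMap.range (u ^ (n + 1)) = B := by
    have hle : LinearMap.range (u ^ (n + 1)) ≤ B := by
      rw [hB, pow_succ, Module.End.mul_eq_comp]
      exact LinearMap.range_comp_le_range _ _
    have e1 := LinearMap.finrank_range_add_finrank_ker (u ^ (n + 1))
    have e2 := LinearMap.finrank_range_add_finrank_ker (u ^ n)
    rw [hker_le (n + 1) (Nat.le_succ n)] at e1
    rw [← hA, ← hB] at e2
    have : Module.finrank K ↥(LinearMap.range (u ^ (n + 1))) = Module.finrank K ↥B :=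
      Nat.add_right_cancel (e1.trans e2.symm)
    exact Submodule.eq_of_le_of_finrank_eq hle this
  have huB : Submodule.map u B = B := by
    rw [hB, ← LinearMap.range_comp, ← Module.End.mul_eq_comp, ← pow_succ']
    exact hrange_succ
  have hdisj : ∀ x : V, x ∈ A → x ∈ B → x = 0 := by
    intro x hxA hxB
    obtain ⟨y, hy⟩ := LinearMap.mem_range.mp hxB
    have hxk : (u ^ n) x = 0 := LinearMap.mem_ker.mp hxA
    have hy2 : (u ^ (n + n)) y = 0 := by
      have : (u ^ (n + n)) y = (u ^ n) ((u ^ n) y) := by rw [pow_add]; rfl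
      rw [this, hy, hxk]
    have : y ∈ A := by
      rw [← hker_le (n + n) (Nat.le_add_right n n)]
      exact LinearMap.mem_ker.mpr hy2
    rw [← hy]
    exact LinearMap.mem_ker.mp this ▸ rfl
  have hinfAB : A ⊓ B = ⊥ := by
    rw [Submodule.eq_bot_iff]
    intro x hx
    exact hdisj x hx.1 hx.2
  have hfrAB : Module.finrank K ↥B + Module.finrank K ↥A = n := by
    rw [hn, hA, hB]
    exact LinearMap.finrank_range_add_finrank_ker (u ^ n)
  have hsup : A ⊔ B = ⊤ := by
    apply Submodule.eq_top_of_finrank_eq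
    have h3 := Submodule.finrank_sup_add_finrank_inf_eq A B
    rw [hinfAB, finrank_bot, add_zero] at h3
    rw [h3, ← hn, ← hfrAB]
    exact (Nat.add_comm _ _)
  have hdecomp : ∀ v : V, ∃ a ∈ A, ∃ b ∈ B, a + b = v := by
    intro v
    have : v ∈ A ⊔ B := by rw [hsup]; trivial
    obtain ⟨a, ha, b, hb, hab⟩ := Submodule.mem_sup.mp this
    exact ⟨a, ha, b, hb, hab⟩
  -- orthogonality of A and B
  have horth : ∀ k : ℕ, ∀ a : V, (u ^ k) a = 0 → ∀ b ∈ B, QuadraticMap.polar ⇑Q a b = 0 := by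
    intro k
    induction k with
    | zero =>
      intro a ha b _
      have : a = 0 := by simpa using ha
      rw [this]
      unfold QuadraticMap.polar
      simp
    | succ k ih =>
      intro a ha b hb
      have hbB' : b ∈ Submodule.map u B := by rw [huB]; exact hb
      obtain ⟨b', hb'B, hb'⟩ := Submodule.mem_map.mp hbB'
      have key : QuadraticMap.polar ⇑Q a b = QuadraticMap.polar ⇑Q (ξ.symm a - a) b' := by
        rw [← hb', huapp, QuadraticMap.polar_sub_right, QuadraticMap.polar_sub_left]
        have hmove : QuadraticMap.polar ⇑Q a (ξ b') = QuadraticMap.polar ⇑Q (ξ.symm a) b' := by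
          conv_lhs => rw [← ξ.apply_symm_apply a]
          exact polar_map_of_inO hξO (ξ.symm a) b'
        rw [hmove]
      rw [key]
      apply ih _ _ _ hb'B
      have heq : ξ.symm a - a = -(ξ.symm (u a)) := by
        rw [huapp, map_sub, ξ.symm_apply_apply]
        abel
      rw [heq, map_neg, hpow_sym]
      have : (u ^ k) (u a) = 0 := by
        have : (u ^ (k + 1)) a = (u ^ k) (u a) := by rw [pow_succ]; rfl
        rw [← this, ha]
      rw [this]
      simp
  have hAperpB : ∀ a ∈ A, ∀ b ∈ B, QuadraticMap.polar ⇑Q a b = 0 := fun a ha b hb =>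
    horth n a (LinearMap.mem_ker.mp ha) b hb
  -- nondegeneracy of A and B
  have hndA : NondegOn Q A := by
    intro a haA hperp
    have hperp' : ∀ w ∈ A, QuadraticMap.polar ⇑Q a w = 0 := hperp
    apply hQ a
    intro w
    obtain ⟨x, hx, y, hy, hxy⟩ := hdecomp w
    have : polarF Q a w = QuadraticMap.polar ⇑Q a x + QuadraticMap.polar ⇑Q a y := by
      rw [← hxy]
      exact QuadraticMap.polar_add_right _ _ _ _
    rw [this, hperp' x hx, hAperpB a haA y hy, add_zero]
  have hndB : NondegOn Q B := by
    intro b hbB hperp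
    have hperp' : ∀ w ∈ B, QuadraticMap.polar ⇑Q b w = 0 := hperp
    apply hQ b
    intro w
    obtain ⟨x, hx, y, hy, hxy⟩ := hdecomp w
    have : polarF Q b w = QuadraticMap.polar ⇑Q b x + QuadraticMap.polar ⇑Q b y := by
      rw [← hxy]
      exact QuadraticMap.polar_add_right _ _ _ _
    rw [this, hperp' y hy, add_zero]
    rw [QuadraticMap.polar_comm]
    exact hAperpB x hx b hbB
  -- B has even dimension
  have hBeven : Even (Module.finrank K ↥B) := by
    rcases Nat.even_or_odd (Module.finrank K ↥B) with he | ho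
    · exact he
    exfalso
    apply hsummands
    refine ⟨B, ?_, ?_, ho, hndB⟩
    · intro hbot
      rw [hbot] at ho
      simp [finrank_bot] at ho
    · intro x hx
      obtain ⟨y, hy⟩ := LinearMap.mem_range.mp hx
      refine LinearMap.mem_range.mpr ⟨φ y, ?_⟩
      have : φ.toLinearMap x = φ x := rfl
      rw [this, ← hy, hpow_phi]
  -- the unipotent part on A
  have huA : ∀ x ∈ A, u x ∈ A := by
    intro x hx
    refine LinearMap.mem_ker.mpr ?_
    rw [hpow_u, LinearMap.mem_ker.mp hx, map_zero]
  set uA : Module.End K ↥A := u.restrict huA with huAdef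
  have hcoe_uA : ∀ x : ↥A, ((uA x : ↥A) : V) = u ↑x := fun x => rfl
  have hcoe_pow : ∀ k : ℕ, ∀ x : ↥A, (((uA ^ k) x : ↥A) : V) = (u ^ k) ↑x := by
    intro k
    induction k with
    | zero => intro x; simp
    | succ k ih =>
      intro x
      rw [pow_succ, pow_succ]
      show (((uA ^ k) (uA x) : ↥A) : V) = (u ^ k) (u ↑x)
      rw [← hcoe_uA x]
      exact ih (uA x)
  have hnilA : IsNilpotent uA := by
    refine ⟨n, ?_⟩
    ext x
    have h0 : (((uA ^ n) x : ↥A) : V) = 0 := by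
      rw [hcoe_pow]
      exact LinearMap.mem_ker.mp x.2
    simpa using h0
  have h2E : IsUnit (2 : Module.End K ↥A) := by
    have hk : IsUnit (2 : K) := isUnit_iff_ne_zero.mpr h2
    have := hk.map (algebraMap K (Module.End K ↥A))
    rwa [map_ofNat] at this
  have hcomm2 : Commute uA (2 : Module.End K ↥A) := by
    have h12 : (2 : Module.End K ↥A) = 1 + 1 := by norm_num
    rw [h12]
    exact (Commute.one_right uA).add_right (Commute.one_right uA)
  have hwu : IsUnit (uA + 2) := hnilA.isUnit_add_right_of_commute h2E hcomm2
  obtain ⟨w, hw⟩ := hwu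
  set C : Module.End K ↥A := uA * ↑w⁻¹ with hC
  have hCw : ∀ z : ↥A, C ((uA + 2) z) = uA z := by
    intro z
    have hmul : C * (uA + 2) = uA := by
      rw [hC, ← hw, mul_assoc]
      rw [w.inv_mul, mul_one]
    calc C ((uA + 2) z) = (C * (uA + 2)) z := rfl
      _ = uA z := by rw [hmul]
  have hwsurj : ∀ x : ↥A, ∃ z : ↥A, (uA + 2) z = x := by
    intro x
    refine ⟨(↑w⁻¹ : Module.End K ↥A) x, ?_⟩
    rw [← hw]
    calc (↑w : Module.End K ↥A) ((↑w⁻¹ : Module.End K ↥A) x)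
        = ((↑w * ↑w⁻¹ : Module.End K ↥A)) x := rfl
      _ = x := by rw [w.mul_inv]; rfl
  have hcoe2 : ∀ z : ↥A, (((uA + 2) z : ↥A) : V) = u ↑z + (↑z + ↑z) := by
    intro z
    have : (uA + 2) z = uA z + (z + z) := by
      have h12 : (2 : Module.End K ↥A) = 1 + 1 := by norm_num
      rw [LinearMap.add_apply, h12]
      rfl
    rw [this]
    push_cast [hcoe_uA]
    rfl
  -- the key relation from ξ being an isometry
  have hR : ∀ x y : ↥A, QuadraticMap.polar ⇑Q (u ↑x) (u ↑y) + QuadraticMap.polar ⇑Q (u ↑x) ↑y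
      + QuadraticMap.polar ⇑Q ↑x (u ↑y) = 0 := by
    intro x y
    have hiso := polar_map_of_inO hξO (↑x : V) (↑y : V)
    have hex : (ξ : V → V) ↑x = u ↑x + ↑x := by rw [huapp]; abel
    have hey : (ξ : V → V) ↑y = u ↑y + ↑y := by rw [huapp]; abel
    rw [hex, hey, QuadraticMap.polar_add_left, QuadraticMap.polar_add_right,
      QuadraticMap.polar_add_right] at hiso
    linear_combination hiso
  -- skew-symmetry of the Cayley-type form
  have hskewC : ∀ x y : ↥A,
      QuadraticMap.polar ⇑Q ↑(C x) ↑y = - QuadraticMap.polar ⇑Q ↑x ↑(C y) := by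
    intro x y
    obtain ⟨x', rfl⟩ := hwsurj x
    obtain ⟨y', rfl⟩ := hwsurj y
    rw [hCw, hCw, hcoe_uA, hcoe_uA, hcoe2, hcoe2]
    rw [QuadraticMap.polar_add_right, QuadraticMap.polar_add_right,
      QuadraticMap.polar_add_left, QuadraticMap.polar_add_left]
    linear_combination 2 * hR x' y'
  -- complement of ker C
  obtain ⟨W, hWc⟩ := Submodule.exists_isCompl (LinearMap.ker C)
  have hWdecomp : ∀ z : ↥A, ∃ zk ∈ LinearMap.ker C, ∃ zw ∈ W, zk + zw = z := by
    intro z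
    have : z ∈ LinearMap.ker C ⊔ W := by rw [hWc.sup_eq_top]; trivial
    obtain ⟨zk, hzk, zw, hzw, hz⟩ := Submodule.mem_sup.mp this
    exact ⟨zk, hzk, zw, hzw, hz⟩
  -- the bilinear form on W
  set GW : ↥W →ₗ[K] ↥W →ₗ[K] K := LinearMap.mk₂ K
    (fun x y => QuadraticMap.polar ⇑Q ↑(C ↑x) ((↑y : ↥A) : V))
    (by
      intro m₁ m₂ nn
      push_cast [map_add]
      exact QuadraticMap.polar_add_left _ _ _ _)
    (by
      intro c m nn
      push_cast [map_smul]
      rw [QuadraticMap.polar_smul_left])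
    (by
      intro m n₁ n₂
      push_cast
      exact QuadraticMap.polar_add_right _ _ _ _)
    (by
      intro c m nn
      push_cast
      rw [QuadraticMap.polar_smul_right]) with hGW
  have hGW_apply : ∀ x y : ↥W, GW x y
      = QuadraticMap.polar ⇑Q ↑(C ↑x) ((↑y : ↥A) : V) := fun x y => rfl
  have hskewGW : ∀ x y : ↥W, GW x y = - GW y x := by
    intro x y
    rw [hGW_apply, hGW_apply, hskewC, QuadraticMap.polar_comm]
  have hndGW : ∀ x : ↥W, (∀ y : ↥W, GW x y = 0) → x = 0 := by
    intro x hx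
    have hCx : C ↑x = 0 := by
      have hnd' : ∀ z : ↥A, QuadraticMap.polar ⇑Q ↑(C ↑x) (↑z : V) = 0 := by
        intro z
        obtain ⟨zk, hzk, zw, hzw, hz⟩ := hWdecomp z
        have hcoez : (↑z : V) = ↑zk + ↑zw := by rw [← hz]; rfl
        rw [hcoez, QuadraticMap.polar_add_right]
        have t1 : QuadraticMap.polar ⇑Q ↑(C ↑x) (↑zk : V) = 0 := by
          rw [hskewC]
          have : C zk = 0 := LinearMap.mem_ker.mp hzk
          rw [this]
          simp [QuadraticMap.polar_zero_right]
        have t2 : QuadraticMap.polar ⇑Q ↑(C ↑x) (↑zw : V) = 0 := hx ⟨zw, hzw⟩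
        rw [t1, t2, add_zero]
      have h0 : ((C ↑x : ↥A) : V) = 0 := hndA ↑(C ↑x) (C ↑x).2 (fun w' hw' => hnd' ⟨w', hw'⟩)
      exact Subtype.ext h0
    have hmem : (↑x : ↥A) ∈ LinearMap.ker C ⊓ W := ⟨LinearMap.mem_ker.mpr hCx, x.2⟩
    rw [hWc.inf_eq_bot, Submodule.mem_bot] at hmem
    exact Subtype.ext hmem
  have hevenW : Even (Module.finrank K ↥W) := even_finrank_of_skew hchar GW hskewGW hndGW
  -- rank bookkeeping on A
  have hWC : Module.finrank K ↥(LinearMap.ker C) + Module.finrank K ↥W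
      = Module.finrank K ↥A := Submodule.finrank_add_eq_of_isCompl hWc
  have hrn : Module.finrank K ↥(LinearMap.range C) + Module.finrank K ↥(LinearMap.ker C)
      = Module.finrank K ↥A := LinearMap.finrank_range_add_finrank_ker C
  have hrange_eq : Module.finrank K ↥(LinearMap.range C) = Module.finrank K ↥W := by
    omega
  have hrangeC : LinearMap.range C = LinearMap.range uA := by
    rw [hC, Module.End.mul_eq_comp, LinearMap.range_comp]
    have hsurj : LinearMap.range ((↑w⁻¹ : Module.End K ↥A)) = ⊤ := by
      rw [LinearMap.range_eq_top]
      intro x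
      refine ⟨(↑w : Module.End K ↥A) x, ?_⟩
      calc (↑w⁻¹ : Module.End K ↥A) ((↑w : Module.End K ↥A) x)
          = ((↑w⁻¹ * ↑w : Module.End K ↥A)) x := rfl
        _ = x := by rw [w.inv_mul]; rfl
    rw [hsurj, Submodule.map_top]
  have hmap : Submodule.map u A = Submodule.map A.subtype (LinearMap.range uA) := by
    ext v
    constructor
    · intro hv
      obtain ⟨x, hxA, hx⟩ := Submodule.mem_map.mp hv
      exact Submodule.mem_map.mpr ⟨uA ⟨x, hxA⟩, LinearMap.mem_range.mpr ⟨⟨x, hxA⟩, rfl⟩,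
        by rw [Submodule.coe_subtype, hcoe_uA]; exact hx⟩
    · intro hv
      obtain ⟨y, hy, hyv⟩ := Submodule.mem_map.mp hv
      obtain ⟨z, hz⟩ := LinearMap.mem_range.mp hy
      refine Submodule.mem_map.mpr ⟨↑z, z.2, ?_⟩
      rw [← hcoe_uA, hz]
      exact hyv
  have hfr_mapA : Module.finrank K ↥(Submodule.map u A)
      = Module.finrank K ↥(LinearMap.range uA) := by
    rw [hmap]
    exact Submodule.finrank_map_subtype_eq A (LinearMap.range uA)
  have hEvenMapA : Even (Module.finrank K ↥(Submodule.map u A)) := by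
    rw [hfr_mapA, ← hrangeC, hrange_eq]
    exact hevenW
  -- final assembly
  have hrange_u : LinearMap.range u = Submodule.map u A ⊔ B := by
    rw [LinearMap.range_eq_map, ← hsup, Submodule.map_sup, huB]
  have hinf2 : Submodule.map u A ⊓ B = ⊥ := by
    rw [Submodule.eq_bot_iff]
    rintro x ⟨hx1, hx2⟩
    obtain ⟨a, haA, ha⟩ := Submodule.mem_map.mp hx1
    have hxA : x ∈ A := by rw [← ha]; exact huA a haA
    exact hdisj x hxA hx2
  have hfr_sum : Module.finrank K ↥(LinearMap.range u)
      = Module.finrank K ↥(Submodule.map u A) + Module.finrank K ↥B := by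
    have h3 := Submodule.finrank_sup_add_finrank_inf_eq (Submodule.map u A) B
    rw [hinf2, finrank_bot, add_zero] at h3
    rw [hrange_u, h3]
  rw [hfr_sum]
  exact hEvenMapA.add hBeven
end
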